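/- arXiv:2111.11258 — 2 statements merged into one kernel-verified Lean document; each statement's English description precedes it below -/
import Mathlib

section
/- Let g = (g₁,…,g_r) be polynomials in ℝ[X₁,…,X_n] and let z ∈ S = S(g) be a point at which the Constraint Qualification Condition holds. Then there exist reals ε'' > 0 and 𝔠'' > 0 (depending on z) such that every y ∈ ℝⁿ satisfying dist(y, S) = ‖y − z‖₂ and dist(y, S) ≤ ε'' also satisfies dist(y, S) ≤ 𝔠'' · G(y). -/
open MvPolynomial Metric Set

noncomputable section

abbrev MvPoly (n : ℕ) := MvPolynomial (Fin n) ℝ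

/-- `p` is a sum of squares of polynomials. -/
def IsSOS {n : ℕ} (p : MvPoly n) : Prop :=
  ∃ (k : ℕ) (q : Fin k → MvPoly n), p = ∑ i, (q i) ^ 2

/-- Membership in the truncated quadratic module `Q_ℓ(g)`. -/
def InQM {n r : ℕ} (g : Fin r → MvPoly n) (ℓ : ℕ) (p : MvPoly n) : Prop :=
  ∃ (σ₀ : MvPoly n) (σ : Fin r → MvPoly n),
    IsSOS σ₀ ∧ (∀ i, IsSOS (σ i)) ∧
    σ₀.totalDegree ≤ ℓ ∧ (∀ i, (σ i * g i).totalDegree ≤ ℓ) ∧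
    p = σ₀ + ∑ i, σ i * g i

/-- The basic closed semialgebraic set `S(g)`. -/
def Sg {n r : ℕ} (g : Fin r → MvPoly n) : Set (EuclideanSpace ℝ (Fin n)) :=
  {x | ∀ i, 0 ≤ eval (fun j => x j) (g i)}

/-- The box `[-1,1]^n`. -/
def Box (n : ℕ) : Set (EuclideanSpace ℝ (Fin n)) :=
  {x | ∀ i, |x i| ≤ 1}

/-- Max norm of a polynomial over `[-1,1]^n`. -/
def boxNorm {n : ℕ} (f : MvPoly n) : ℝ :=
  sSup ((fun x : EuclideanSpace ℝ (Fin n) => |eval (fun j => x j) f|) '' Box n)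

/-- The algebraic distance `G(x) = |min{g₁(x),…,g_r(x),0}|`. -/
def Gfun {n r : ℕ} (g : Fin r → MvPoly n) (x : EuclideanSpace ℝ (Fin n)) : ℝ :=
  |min (⨅ i, eval (fun j => x j) (g i)) 0|

/-- Gradient of a polynomial at a point. -/
def polyGrad {n : ℕ} (p : MvPoly n) (x : EuclideanSpace ℝ (Fin n)) : EuclideanSpace ℝ (Fin n) :=
  WithLp.toLp 2 (fun j => eval (fun i => x i) (pderiv j p))

/-- Constraint Qualification Condition at `x`. -/
def CQC {n r : ℕ} (g : Fin r → MvPoly n) (x : EuclideanSpace ℝ (Fin n)) : Prop :=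
  LinearIndependent ℝ (fun i : {i : Fin r // eval (fun j => x j) (g i) = 0} => polyGrad (g i.1) x)

open scoped RealInnerProductSpace

lemma hasFDerivAt_evalPoly {n : ℕ} (p : MvPoly n) (z : EuclideanSpace ℝ (Fin n)) :
    HasFDerivAt (fun x : EuclideanSpace ℝ (Fin n) => eval (fun j => x j) p)
      (innerSL ℝ (polyGrad p z)) z := by
  induction p using MvPolynomial.induction_on with
  | C a =>
      have : innerSL ℝ (polyGrad (C a : MvPoly n) z) = 0 := by
        have h0 : polyGrad (C a : MvPoly n) z = 0 := by
          ext j; simp [polyGrad]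
        rw [h0]; exact map_zero _
      simpa [this] using hasFDerivAt_const (a : ℝ) z
  | add p q hp hq =>
      have h0 : polyGrad (p + q) z = polyGrad p z + polyGrad q z := by
        ext j; simp [polyGrad]
      have := hp.add hq
      rw [h0, map_add]
      exact this.congr_of_eventuallyEq (Filter.Eventually.of_forall fun x => by simp)
  | mul_X p s hp =>
      have hX : HasFDerivAt (fun x : EuclideanSpace ℝ (Fin n) => x s)
          (EuclideanSpace.proj s : EuclideanSpace ℝ (Fin n) →L[ℝ] ℝ) z :=
        by simpa using (EuclideanSpace.proj s : EuclideanSpace ℝ (Fin n) →L[ℝ] ℝ).hasFDerivAt (x := z)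
      have h := hp.mul hX
      have heq : (fun x : EuclideanSpace ℝ (Fin n) => eval (fun j => x j) (p * X s))
          = fun x => (eval (fun j => x j) p) * x s := by
        funext x; simp
      rw [heq]
      refine h.congr_fderiv ?_
      symm
      ext w
      classical
      simp only [ContinuousLinearMap.add_apply, ContinuousLinearMap.smul_apply,
        innerSL_apply_apply, smul_eq_mul]
      rw [PiLp.inner_apply, PiLp.inner_apply]
      simp only [RCLike.inner_apply, conj_trivial, polyGrad]
      simp only [pderiv_mul, pderiv_X, map_add, map_mul, eval_X]
      have hproj : (EuclideanSpace.proj s : EuclideanSpace ℝ (Fin n) →L[ℝ] ℝ) w = w s := rfl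
      rw [hproj]
      have key : ∀ x : Fin n, ((eval fun i => z i) ((pderiv x) p) * z s
            + (eval fun i => z i) p * (eval fun i => z i) (Pi.single (M := fun _ : Fin n => MvPoly n) x 1 s)) * w x
          = z s * ((eval fun i => z i) ((pderiv x) p) * w x)
            + (if x = s then (eval fun i => z i) p * w x else 0) := by
        intro x; by_cases hx : x = s
        · subst hx; simp [Pi.single_eq_same]; ring
        · simp [Pi.single_eq_of_ne hx, hx]; ring
      rw [Finset.sum_congr rfl fun x _ => (mul_comm _ _).trans (key x), Finset.sum_add_distrib,
        Finset.sum_ite_eq' Finset.univ s, ← Finset.mul_sum]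
      simp [add_comm, mul_comm]

lemma exists_dual_vec {E : Type*} [NormedAddCommGroup E] [InnerProductSpace ℝ E]
    {ι : Type*} [Fintype ι] (v : ι → E) (hv : LinearIndependent ℝ v) :
    ∃ e : E, ∀ i, ⟪v i, e⟫ = 1 := by
  classical
  set T : E →ₗ[ℝ] (ι → ℝ) := LinearMap.pi (fun i => (innerSL ℝ (v i)).toLinearMap) with hT
  have hTapp : ∀ x i, T x i = ⟪v i, x⟫ := fun x i => rfl
  have hsurj : Function.Surjective T := by
    by_contra hns
    have hlt : LinearMap.range T < ⊤ := by
      rw [lt_top_iff_ne_top]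
      intro h
      exact hns (LinearMap.range_eq_top.mp h)
    obtain ⟨φ, φ0, hker⟩ := Submodule.exists_le_ker_of_lt_top _ hlt
    set c : ι → ℝ := fun i => φ (fun j => if i = j then (1:ℝ) else 0) with hc
    have hzero : ∀ x : E, ⟪∑ i, c i • v i, x⟫ = 0 := by
      intro x
      have hx : φ (T x) = 0 := hker (LinearMap.mem_range_self T x)
      have hrw : T x = ∑ i, (T x i) • (fun j => if i = j then (1:ℝ) else 0) := pi_eq_sum_univ (T x)
      rw [hrw, map_sum] at hx
      rw [sum_inner, ← hx]
      refine Finset.sum_congr rfl fun i _ => ?_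
      rw [real_inner_smul_left, map_smul, smul_eq_mul, hTapp]
      exact mul_comm _ _
    have hv0 : (∑ i, c i • v i) = 0 := by
      have := hzero (∑ i, c i • v i)
      exact inner_self_eq_zero.mp this
    have hc0 : ∀ i, c i = 0 := fun i => Fintype.linearIndependent_iff.mp hv c hv0 i
    apply φ0
    apply LinearMap.ext
    intro x
    have hrw : x = ∑ i, (x i) • (fun j => if i = j then (1:ℝ) else 0) := pi_eq_sum_univ x
    rw [hrw, map_sum]
    simp only [map_smul, smul_eq_mul]
    have : ∀ i, φ (fun j => if i = j then (1:ℝ) else 0) = c i := fun i => rfl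
    simp [this, hc0]
  obtain ⟨e, he⟩ := hsurj (fun _ => 1)
  exact ⟨e, fun i => by rw [← hTapp e i, he]⟩

set_option maxHeartbeats 1000000 in
/-- local Łojasiewicz inequality with exponent `1` around a point `z ∈ S(g)`
where the Constraint Qualification Condition holds (Lemma `lem::L_equal_1_local`). -/
theorem L_equal_one_local {n r : ℕ} (g : Fin r → MvPoly n)
    (z : EuclideanSpace ℝ (Fin n)) (hz : z ∈ Sg g) (hCQC : CQC g z) :
    ∃ ε'' : ℝ, 0 < ε'' ∧ ∃ 𝔠'' : ℝ, 0 < 𝔠'' ∧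
      ∀ y : EuclideanSpace ℝ (Fin n),
        infDist y (Sg g) = dist y z →
        infDist y (Sg g) ≤ ε'' →
        infDist y (Sg g) ≤ 𝔠'' * Gfun g y := by
  classical
  set fe : Fin r → EuclideanSpace ℝ (Fin n) → ℝ := fun i x => eval (fun j => x j) (g i) with hfe
  set w : Fin r → EuclideanSpace ℝ (Fin n) := fun i => polyGrad (g i) z with hw
  -- dual vector
  haveI : Fintype {i : Fin r // eval (fun j => z j) (g i) = 0} := Fintype.ofFinite _
  obtain ⟨e, he⟩ := exists_dual_vec _ hCQC
  have he' : ∀ i : Fin r, eval (fun j => z j) (g i) = 0 → ⟪w i, e⟫ = 1 :=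
    fun i hi => he ⟨i, hi⟩
  set s : ℝ := min 1 (1 / (2 * (‖e‖ + 1))) with hsdef
  have hs : 0 < s := by
    apply lt_min one_pos
    positivity
  have hs1 : s ≤ 1 := min_le_left _ _
  have hse : s * ‖e‖ ≤ 1 / 2 := by
    have h1 : s ≤ 1 / (2 * (‖e‖ + 1)) := min_le_right _ _
    have h2 : (0:ℝ) ≤ ‖e‖ := norm_nonneg _
    have h3 : 0 < 2 * (‖e‖ + 1) := by positivity
    rw [le_div_iff₀ h3] at h1
    nlinarith
  set κ : ℝ := s / 8 with hκdef
  have hκ : 0 < κ := by positivity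
  -- eventual Taylor + positivity statement
  have hev : ∀ᶠ x in nhds z, ∀ i : Fin r,
      |fe i x - fe i z - ⟪w i, x - z⟫| ≤ κ * ‖x - z‖ ∧
      (eval (fun j => z j) (g i) ≠ 0 → 0 < fe i x) := by
    rw [Filter.eventually_all]
    intro i
    have hD := hasFDerivAt_evalPoly (g i) z
    have h1 : ∀ᶠ x in nhds z, |fe i x - fe i z - ⟪w i, x - z⟫| ≤ κ * ‖x - z‖ := by
      have := hD.isLittleO.def hκ
      filter_upwards [this] with x hx
      simpa [Real.norm_eq_abs, hfe] using hx
    have h2 : ∀ᶠ x in nhds z, (eval (fun j => z j) (g i) ≠ 0 → 0 < fe i x) := by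
      by_cases hi : eval (fun j => z j) (g i) = 0
      · filter_upwards with x hx; exact absurd hi hx
      · have hpos : 0 < fe i z := lt_of_le_of_ne (hz i) (Ne.symm hi)
        have hcont : ContinuousAt (fe i) z := hD.continuousAt
        filter_upwards [hcont.eventually (eventually_gt_nhds hpos)] with x hx _
        exact hx
    exact h1.and h2
  rw [Metric.eventually_nhds_iff] at hev
  obtain ⟨δ, hδpos, hδ⟩ := hev
  refine ⟨δ/2, by positivity, 8/s, by positivity, ?_⟩
  intro y hyz hyε
  rcases eq_or_lt_of_le (dist_nonneg : (0:ℝ) ≤ dist y z) with h0 | ht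
  · rw [hyz, ← h0]
    have : 0 ≤ Gfun g y := abs_nonneg _
    positivity
  · set t := dist y z with htdef
    rw [hyz] at hyε
    have hnyz : ‖y - z‖ = t := (dist_eq_norm y z).symm
    obtain ⟨u, hu'⟩ : ∃ u : EuclideanSpace ℝ (Fin n), u = t⁻¹ • (y - z) := ⟨_, rfl⟩
    have hu : ‖u‖ = 1 := by
      rw [hu', norm_smul, Real.norm_eq_abs, abs_of_pos (inv_pos.mpr ht), hnyz,
        inv_mul_cancel₀ ht.ne']
    have hyu : y - z = t • u := by
      rw [hu', smul_smul, mul_inv_cancel₀ ht.ne', one_smul]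
    have hyδ : dist y z < δ := lt_of_le_of_lt hyε (by linarith)
    have hmain : ∃ i : Fin r, eval (fun j => z j) (g i) = 0 ∧ ⟪w i, u⟫ < -(s/4) := by
      by_contra hcon
      push_neg at hcon
      obtain ⟨d, hd⟩ : ∃ d : EuclideanSpace ℝ (Fin n), d = u + s • e := ⟨_, rfl⟩
      have hnd : ‖d‖ ≤ 3/2 := by
        calc ‖d‖ = ‖u + s • e‖ := by rw [hd]
        _ ≤ ‖u‖ + ‖s • e‖ := norm_add_le _ _
        _ = 1 + s * ‖e‖ := by rw [hu, norm_smul, Real.norm_eq_abs, abs_of_pos hs]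
        _ ≤ 3/2 := by linarith
      have hud : 1/2 ≤ ⟪u, d⟫ := by
        have h1 : ⟪u, d⟫ = ⟪u, u⟫ + s * ⟪u, e⟫ := by
          rw [hd, inner_add_right, real_inner_smul_right]
        have h2 : ⟪u, u⟫ = 1 := by
          rw [real_inner_self_eq_norm_sq, hu]; norm_num
        have h3 : |⟪u, e⟫| ≤ ‖e‖ := by simpa [hu] using abs_real_inner_le_norm u e
        have h4 := (abs_le.mp h3).1
        nlinarith [norm_nonneg e]
      obtain ⟨p, hp⟩ : ∃ p : EuclideanSpace ℝ (Fin n), p = z + (t/8) • d := ⟨_, rfl⟩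
      have hpzn : ‖p - z‖ = (t/8) * ‖d‖ := by
        have : p - z = (t/8) • d := by rw [hp]; abel
        rw [this, norm_smul, Real.norm_eq_abs, abs_of_pos (by linarith : (0:ℝ) < t/8)]
      have hpz : dist p z < δ := by
        rw [dist_eq_norm, hpzn]
        nlinarith
      have hpS : p ∈ Sg g := by
        intro i
        by_cases hi : eval (fun j => z j) (g i) = 0
        · have h1 := (hδ hpz i).1
          have hinner : ⟪w i, p - z⟫ = (t/8) * (⟪w i, u⟫ + s) := by
            have hpzd : p - z = (t/8) • d := by rw [hp]; abel
            rw [hpzd, real_inner_smul_right, hd, inner_add_right, real_inner_smul_right,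
              he' i hi]
            ring
          have h2 : fe i z = 0 := hi
          have hwu : -(s/4) ≤ ⟪w i, u⟫ := hcon i hi
          have h3 := (abs_le.mp h1).1
          rw [h2, hinner, hpzn, hκdef] at h3
          show 0 ≤ fe i p
          have e0 : (0:ℝ) ≤ s * t := mul_nonneg hs.le ht.le
          have e1 : s/8 * (t/8 * ‖d‖) ≤ s/8 * (t/8 * (3/2)) := by
            apply mul_le_mul_of_nonneg_left _ (by positivity)
            exact mul_le_mul_of_nonneg_left hnd (by positivity)
          have e2 : t/8 * (3*s/4) ≤ t/8 * (⟪w i, u⟫ + s) := by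
            apply mul_le_mul_of_nonneg_left (by linarith) (by positivity)
          nlinarith
        · exact le_of_lt ((hδ hpz i).2 hi)
      have hle : t ≤ dist y p := hyz ▸ infDist_le_dist_of_mem hpS
      have hwd : ⟪y - z, d⟫ = t * ⟪u, d⟫ := by rw [hyu, real_inner_smul_left]
      have hyp : dist y p = ‖(y - z) - (t/8) • d‖ := by
        rw [dist_eq_norm]
        congr 1
        rw [hp]; abel
      have hsq : dist y p ^ 2 < t ^ 2 := by
        rw [hyp, norm_sub_sq_real, real_inner_smul_right, hwd, hnyz, norm_smul,
          Real.norm_eq_abs, abs_of_pos (by linarith : (0:ℝ) < t/8)]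
        have hd2 : ((t/8) * ‖d‖)^2 ≤ ((t/8) * (3/2))^2 := by
          apply pow_le_pow_left₀ (by positivity)
          have : 0 < t/8 := by linarith
          nlinarith [norm_nonneg d]
        nlinarith
      have : dist y p < t := by
        have h0 : (0:ℝ) ≤ t := ht.le
        exact lt_of_pow_lt_pow_left₀ 2 h0 hsq
      linarith
    obtain ⟨i, hiact, hiu⟩ := hmain
    have h1 := (hδ hyδ i).1
    have hfez : fe i z = 0 := hiact
    have hinner : ⟪w i, y - z⟫ = t * ⟪w i, u⟫ := by rw [hyu, real_inner_smul_right]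
    have hfy : fe i y ≤ -(κ * t) := by
      have h3 := (abs_le.mp h1).2
      rw [hfez, hinner, hnyz] at h3
      nlinarith
    have hG : (s/8) * t ≤ Gfun g y := by
      have hbdd : BddBelow (Set.range fun i => eval (fun j => y j) (g i)) :=
        Set.Finite.bddBelow (Set.finite_range _)
      have hmin : min (⨅ i, eval (fun j => y j) (g i)) 0 ≤ fe i y :=
        le_trans (min_le_left _ _) (ciInf_le hbdd i)
      have hmin0 : min (⨅ i, eval (fun j => y j) (g i)) 0 ≤ 0 := min_le_right _ _
      have : Gfun g y = |min (⨅ i, eval (fun j => y j) (g i)) 0| := rfl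
      rw [this, abs_of_nonpos hmin0]
      have hκt : κ * t = (s/8) * t := by rw [hκdef]
      nlinarith
    rw [hyz]
    calc t = (8/s) * ((s/8) * t) := by field_simp
    _ ≤ (8/s) * Gfun g y := by
        apply mul_le_mul_of_nonneg_left hG (by positivity)

end
end

section
/- In ℝ[X₁,…,X_n], every polynomial of the form Σ_J σ_J · Π_{h∈J} h, where J ranges over subsets of the 2n generators {1−X₁, 1+X₁, …, 1−X_n, 1+X_n}, each σ_J is a sum of squares of polynomials, and each summand σ_J·Π_{h∈J} h has degree ≤ d, belongs to the truncated quadratic module Q_{d+n}(1 − (X₁² + ⋯ + X_n²)); i.e., it can be written as σ + τ·(1 − Σᵢ Xᵢ²) with σ, τ sums of squares, deg σ ≤ d+n, and deg(τ·(1 − Σᵢ Xᵢ²)) ≤ d+n. -/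
open MvPolynomial Metric Set

noncomputable section

/-- The `2n` generators `1 - Xᵢ`, `1 + Xᵢ` of the preordering of the box `[-1,1]ⁿ`. -/
def boxGen {n : ℕ} (p : Fin n × Bool) : MvPoly n :=
  if p.2 then 1 + X p.1 else 1 - X p.1

/- ===== auxiliary development ===== -/

/-- additivity of total degree for nonzero polynomials over ℝ -/
theorem td_mul {n : ℕ} {p q : MvPoly n} (hp : p ≠ 0) (hq : q ≠ 0) :
    (p * q).totalDegree = p.totalDegree + q.totalDegree := by
  set a := p.totalDegree with ha
  set b := q.totalDegree with hb
  set P := homogeneousComponent a p with hP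
  set Q := homogeneousComponent b q with hQ
  have top_ne : ∀ r : MvPoly n, r ≠ 0 → homogeneousComponent r.totalDegree r ≠ 0 := by
    intro r hr
    obtain ⟨d, hd, hde⟩ := Finset.exists_mem_eq_sup r.support (support_nonempty.2 hr)
      (fun m => m.sum fun _ e => e)
    intro h0
    have : coeff d (homogeneousComponent r.totalDegree r) = coeff d r := by
      rw [coeff_homogeneousComponent, if_pos]
      exact hde.symm
    rw [h0, coeff_zero] at this
    exact (mem_support_iff.1 hd) this.symm
  have hPne : P ≠ 0 := top_ne p hp
  have hQne : Q ≠ 0 := top_ne q hq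
  have hPQhom : (P * Q).IsHomogeneous (a + b) :=
    (homogeneousComponent_isHomogeneous a p).mul (homogeneousComponent_isHomogeneous b q)
  have hPQne : P * Q ≠ 0 := mul_ne_zero hPne hQne
  have tail : ∀ (c : ℕ) (r : MvPoly n), c = r.totalDegree →
      r = homogeneousComponent c r + ∑ i ∈ Finset.range c, homogeneousComponent i r := by
    intro c r hc
    have := sum_homogeneousComponent r
    rw [← hc, Finset.sum_range_succ] at this
    linear_combination (norm := ring_nf) -this
  have tdeg_tail : ∀ (c : ℕ) (r : MvPoly n),
      (∑ i ∈ Finset.range c, homogeneousComponent i r).totalDegree + 1 ≤ c ∨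
      (∑ i ∈ Finset.range c, homogeneousComponent i r) = 0 := by
    intro c r
    rcases Nat.eq_zero_or_pos c with h | h
    · right; simp [h]
    · left
      have : (∑ i ∈ Finset.range c, homogeneousComponent i r).totalDegree ≤ c - 1 := by
        apply totalDegree_finsetSum_le
        intro i hi
        by_cases h0 : homogeneousComponent i r = 0
        · simp [h0]
        · rw [(homogeneousComponent_isHomogeneous i r).totalDegree h0]
          have := Finset.mem_range.1 hi; omega
      omega
  have hdP : P.totalDegree = a := (homogeneousComponent_isHomogeneous a p).totalDegree hPne
  have hdQ : Q.totalDegree = b := (homogeneousComponent_isHomogeneous b q).totalDegree hQne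
  set p₁ := ∑ i ∈ Finset.range a, homogeneousComponent i p with hp₁
  set q₁ := ∑ i ∈ Finset.range b, homogeneousComponent i q with hq₁
  have hsplit : p * q = P * Q + (P * q₁ + p₁ * Q + p₁ * q₁) := by
    rw (occs := .pos [1]) [tail a p ha, tail b q hb]
    ring
  have small : ∀ r : MvPoly n, r.totalDegree < a + b → homogeneousComponent (a + b) r = 0 :=
    fun r hr => homogeneousComponent_eq_zero _ r hr
  have cross0 : homogeneousComponent (a + b) (P * q₁ + p₁ * Q + p₁ * q₁) = 0 := by
    have h1 : homogeneousComponent (a + b) (P * q₁) = 0 := by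
      rcases tdeg_tail b q with h | h
      · rw [← hq₁] at h
        apply small
        calc (P * q₁).totalDegree ≤ P.totalDegree + q₁.totalDegree := totalDegree_mul _ _
          _ < a + b := by rw [hdP]; omega
      · rw [← hq₁] at h; rw [h, mul_zero, map_zero]
    have h2 : homogeneousComponent (a + b) (p₁ * Q) = 0 := by
      rcases tdeg_tail a p with h | h
      · rw [← hp₁] at h
        apply small
        calc (p₁ * Q).totalDegree ≤ p₁.totalDegree + Q.totalDegree := totalDegree_mul _ _
          _ < a + b := by rw [hdQ]; omega
      · rw [← hp₁] at h; rw [h, zero_mul, map_zero]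
    have h3 : homogeneousComponent (a + b) (p₁ * q₁) = 0 := by
      rcases tdeg_tail a p with h | h
      · rw [← hp₁] at h
        rcases tdeg_tail b q with h' | h'
        · rw [← hq₁] at h'
          apply small
          calc (p₁ * q₁).totalDegree ≤ p₁.totalDegree + q₁.totalDegree := totalDegree_mul _ _
            _ < a + b := by omega
        · rw [← hq₁] at h'; rw [h', mul_zero, map_zero]
      · rw [← hp₁] at h; rw [h, zero_mul, map_zero]
    rw [map_add, map_add, h1, h2, h3]; ring
  have key : homogeneousComponent (a + b) (p * q) = P * Q := by
    rw [hsplit, map_add, cross0, add_zero]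
    have h := homogeneousComponent_of_mem (m := a + b) ((mem_homogeneousSubmodule _ _).2 hPQhom)
    rw [if_pos rfl] at h
    exact h
  refine le_antisymm (totalDegree_mul _ _) ?_
  by_contra hlt
  push_neg at hlt
  exact hPQne (key ▸ small _ hlt)

lemma isSOS_zero {n : ℕ} : IsSOS (0 : MvPoly n) := ⟨0, fun i => 0, by simp⟩

lemma isSOS_sq {n : ℕ} (q : MvPoly n) : IsSOS (q ^ 2) := ⟨1, fun _ => q, by simp⟩

lemma IsSOS.add {n : ℕ} {p q : MvPoly n} (hp : IsSOS p) (hq : IsSOS q) : IsSOS (p + q) := by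
  obtain ⟨k, f, rfl⟩ := hp
  obtain ⟨m, g, rfl⟩ := hq
  exact ⟨k + m, Fin.append f g, by
    rw [Fin.sum_univ_add]
    simp [Fin.append_left, Fin.append_right]⟩

lemma isSOS_sum {n : ℕ} {ι : Type*} (s : Finset ι) (f : ι → MvPoly n) :
    IsSOS (∑ i ∈ s, f i ^ 2) := by
  induction s using Finset.cons_induction with
  | empty => simpa using isSOS_zero
  | cons a s ha ih => rw [Finset.sum_cons]; exact (isSOS_sq _).add ih

lemma IsSOS.mul {n : ℕ} {p q : MvPoly n} (hp : IsSOS p) (hq : IsSOS q) : IsSOS (p * q) := by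
  obtain ⟨k, f, rfl⟩ := hp
  obtain ⟨m, g, rfl⟩ := hq
  rw [Finset.sum_mul_sum]
  have : ∀ i j, f i ^ 2 * g j ^ 2 = (f i * g j) ^ 2 := fun i j => by ring
  simp_rw [this, ← Finset.sum_product']
  exact isSOS_sum _ _

lemma IsSOS.smul {n : ℕ} {c : ℝ} (hc : 0 ≤ c) {p : MvPoly n} (hp : IsSOS p) :
    IsSOS (C c * p) := by
  have : (C c : MvPoly n) = (C (Real.sqrt c)) ^ 2 := by
    rw [← map_pow, Real.sq_sqrt hc]
  rw [this]
  exact (isSOS_sq _).mul hp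

lemma isSOS_one {n : ℕ} : IsSOS (1 : MvPoly n) := by
  simpa using isSOS_sq (1 : MvPoly n)

/-- The ball polynomial. -/
def gpoly (n : ℕ) : MvPoly n := 1 - ∑ i, (X i : MvPoly n) ^ 2

lemma gpoly_deg {n : ℕ} : (gpoly n).totalDegree ≤ 2 := by
  unfold gpoly
  refine (totalDegree_sub _ _).trans (max_le (by simp) ?_)
  apply totalDegree_finsetSum_le
  intro i _
  simpa using totalDegree_pow (X i : MvPoly n) 2

/-- Representation in the truncated quadratic module of the ball. -/
def RepQ {n : ℕ} (e : ℕ) (p : MvPoly n) : Prop :=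
  ∃ s τ : MvPoly n, IsSOS s ∧ IsSOS τ ∧ s.totalDegree ≤ e ∧
    (τ = 0 ∨ τ.totalDegree + 2 ≤ e) ∧ p = s + τ * gpoly n

lemma RepQ.mono {n : ℕ} {e e' : ℕ} (h : e ≤ e') {p : MvPoly n} (hp : RepQ e p) : RepQ e' p := by
  obtain ⟨s, τ, h1, h2, h3, h4, h5⟩ := hp
  exact ⟨s, τ, h1, h2, h3.trans h, h4.imp id (fun hh => hh.trans h), h5⟩

lemma rep_zero {n : ℕ} (e : ℕ) : RepQ e (0 : MvPoly n) :=
  ⟨0, 0, isSOS_zero, isSOS_zero, by simp, Or.inl rfl, by simp⟩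

lemma rep_one {n : ℕ} (e : ℕ) : RepQ e (1 : MvPoly n) :=
  ⟨1, 0, isSOS_one, isSOS_zero, by simp, Or.inl rfl, by simp⟩

lemma RepQ.add {n : ℕ} {e : ℕ} {p q : MvPoly n} (hp : RepQ e p) (hq : RepQ e q) :
    RepQ e (p + q) := by
  obtain ⟨s, τ, h1, h2, h3, h4, h5⟩ := hp
  obtain ⟨s', τ', h1', h2', h3', h4', h5'⟩ := hq
  refine ⟨s + s', τ + τ', h1.add h1', h2.add h2',
    (totalDegree_add _ _).trans (max_le h3 h3'), ?_, by rw [h5, h5']; ring⟩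
  rcases h4 with rfl | h4
  · rcases h4' with rfl | h4'
    · exact Or.inl (by simp)
    · exact Or.inr (by simpa using h4')
  · rcases h4' with rfl | h4'
    · exact Or.inr (by simpa using h4)
    · refine Or.inr ?_
      have := totalDegree_add τ τ'
      omega
      
lemma RepQ.mul_sos {n : ℕ} {e : ℕ} {σ p : MvPoly n} (hσ : IsSOS σ) (hp : RepQ e p) :
    RepQ (σ.totalDegree + e) (σ * p) := by
  obtain ⟨s, τ, h1, h2, h3, h4, h5⟩ := hp
  refine ⟨σ * s, σ * τ, hσ.mul h1, hσ.mul h2,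
    (totalDegree_mul _ _).trans (by omega), ?_, by rw [h5]; ring⟩
  rcases h4 with rfl | h4
  · exact Or.inl (by simp)
  · refine Or.inr ?_
    have := totalDegree_mul σ τ
    omega

lemma RepQ.factor {n : ℕ} {e : ℕ} {a b f p : MvPoly n} (ha : IsSOS a) (hb : IsSOS b)
    (hda : a.totalDegree ≤ 2) (hdb : b.totalDegree = 0)
    (hf : f = a + b * gpoly n) (hp : RepQ e p) : RepQ (e + 2) (f * p) := by
  obtain ⟨s, τ, h1, h2, h3, h4, h5⟩ := hp
  have hg := gpoly_deg (n := n)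
  refine ⟨a * s + (b * τ) * gpoly n ^ 2, a * τ + b * s,
    (ha.mul h1).add ((hb.mul h2).mul (isSOS_sq _)),
    (ha.mul h2).add (hb.mul h1), ?_, ?_, by rw [hf, h5]; ring⟩
  · refine (totalDegree_add _ _).trans (max_le ((totalDegree_mul _ _).trans (by omega)) ?_)
    rcases h4 with rfl | h4
    · simp
    · refine (totalDegree_mul _ _).trans ?_
      have h6 := totalDegree_mul b τ
      have h7 : (gpoly n ^ 2).totalDegree ≤ 4 := by
        have := totalDegree_pow (gpoly n) 2
        omega
      omega
  · refine Or.inr ?_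
    have h8 : (a * τ + b * s).totalDegree ≤ e := by
      refine (totalDegree_add _ _).trans (max_le ?_ ((totalDegree_mul _ _).trans (by omega)))
      rcases h4 with rfl | h4
      · simp
      · exact (totalDegree_mul _ _).trans (by omega)
    omega

-- new material

def tpoly {n : ℕ} (i : Fin n) : MvPoly n := ∑ j ∈ Finset.univ.erase i, (X j : MvPoly n) ^ 2

lemma tpoly_sos {n : ℕ} (i : Fin n) : IsSOS (tpoly i) := isSOS_sum _ _

lemma tpoly_deg {n : ℕ} (i : Fin n) : (tpoly i).totalDegree ≤ 2 := by
  apply totalDegree_finsetSum_le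
  intro j _
  simpa using totalDegree_pow (X j : MvPoly n) 2

lemma tpoly_key {n : ℕ} (i : Fin n) :
    tpoly i + (X i : MvPoly n) ^ 2 = ∑ j, (X j : MvPoly n) ^ 2 :=
  Finset.sum_erase_add _ _ (Finset.mem_univ i)

lemma boxGen_true {n : ℕ} (i : Fin n) : boxGen (i, true) = 1 + X i := rfl
lemma boxGen_false {n : ℕ} (i : Fin n) : boxGen (i, false) = 1 - X i := rfl

lemma pair_eq {n : ℕ} (i : Fin n) :
    boxGen (i, true) * boxGen (i, false) = tpoly i + 1 * gpoly n := by
  have h := tpoly_key i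
  rw [boxGen_true, boxGen_false]
  unfold gpoly
  linear_combination -h

lemma single_eq {n : ℕ} (i : Fin n) (bb : Bool) :
    boxGen (i, bb) =
      C (1/2 : ℝ) * (boxGen (i, bb) ^ 2 + tpoly i) + C (1/2 : ℝ) * gpoly n := by
  have h := tpoly_key i
  have hC : (C (1/2 : ℝ) : MvPoly n) * 2 = 1 := by
    rw [← C_1 (R := ℝ) (σ := Fin n)]
    rw [show (2 : MvPoly n) = C (2 : ℝ) by simp [map_ofNat]]
    rw [← map_mul]
    norm_num
  cases bb
  · rw [boxGen_false]
    unfold gpoly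
    linear_combination (-(C (1/2 : ℝ) : MvPoly n)) * h - (1 - X i) * hC
  · rw [boxGen_true]
    unfold gpoly
    linear_combination (-(C (1/2 : ℝ) : MvPoly n)) * h - (1 + X i) * hC
    
lemma boxGen_deg_le {n : ℕ} (q : Fin n × Bool) : (boxGen q).totalDegree ≤ 1 := by
  obtain ⟨i, b⟩ := q
  cases b
  · rw [boxGen_false]
    exact (totalDegree_sub _ _).trans (by simp)
  · rw [boxGen_true]
    exact (totalDegree_add _ _).trans (by simp)

lemma boxGen_deg {n : ℕ} (q : Fin n × Bool) : (boxGen q).totalDegree = 1 := by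
  refine le_antisymm (boxGen_deg_le q) ?_
  obtain ⟨i, b⟩ := q
  have hmem : Finsupp.single i 1 ∈ (boxGen (i, b)).support := by
    rw [mem_support_iff]
    have h1 : coeff (Finsupp.single i 1) (X i : MvPoly n) = 1 := by simp
    have h0 : coeff (Finsupp.single i 1) (1 : MvPoly n) = 0 := by
      rw [coeff_one, if_neg]
      intro h
      exact one_ne_zero (Finsupp.single_eq_zero.1 h.symm)
    cases b
    · rw [boxGen_false]; simp [coeff_sub, h1, h0]
    · rw [boxGen_true]; simp [coeff_add, h1, h0]
  have := le_totalDegree hmem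
  simpa [Finsupp.sum_single_index] using this

lemma boxGen_ne_zero {n : ℕ} (q : Fin n × Bool) : boxGen q ≠ 0 := by
  intro h
  have := boxGen_deg q
  rw [h] at this
  simp at this

lemma prod_boxGen_ne_zero {n : ℕ} (J : Finset (Fin n × Bool)) : ∏ q ∈ J, boxGen q ≠ 0 :=
  Finset.prod_ne_zero_iff.2 fun q _ => boxGen_ne_zero q

lemma prod_boxGen_deg {n : ℕ} (J : Finset (Fin n × Bool)) :
    (∏ q ∈ J, boxGen q).totalDegree = J.card := by
  induction J using Finset.cons_induction with
  | empty => simp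
  | cons a s ha ih =>
    rw [Finset.prod_cons, td_mul (boxGen_ne_zero a) (prod_boxGen_ne_zero s), boxGen_deg, ih,
      Finset.card_cons]
    omega
lemma image_fst_erase_pair {n : ℕ} (J : Finset (Fin n × Bool)) (i : Fin n)
    (ht : (i, true) ∈ J) (hf : (i, false) ∈ J) :
    ((J.erase (i, true)).erase (i, false)).image Prod.fst = (J.image Prod.fst).erase i := by
  ext j
  simp only [Finset.mem_image, Finset.mem_erase]
  constructor
  · rintro ⟨⟨q1, q2⟩, ⟨hne1, hne2, hq⟩, rfl⟩
    refine ⟨?_, ⟨(q1, q2), hq, rfl⟩⟩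
    rintro rfl
    cases q2
    · exact hne1 rfl
    · exact hne2 rfl
  · rintro ⟨hji, ⟨q1, q2⟩, hq, rfl⟩
    refine ⟨(q1, q2), ⟨?_, ?_, hq⟩, rfl⟩ <;>
    · rintro h
      rw [Prod.mk.injEq] at h
      exact hji h.1

lemma image_fst_erase_single {n : ℕ} (J : Finset (Fin n × Bool)) (i : Fin n) (b : Bool)
    (hb : (i, b) ∈ J) (hnb : (i, !b) ∉ J) :
    (J.erase (i, b)).image Prod.fst = (J.image Prod.fst).erase i := by
  ext j
  simp only [Finset.mem_image, Finset.mem_erase]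
  constructor
  · rintro ⟨⟨q1, q2⟩, ⟨hne, hq⟩, rfl⟩
    refine ⟨?_, ⟨(q1, q2), hq, rfl⟩⟩
    rintro rfl
    cases q2 <;> cases b <;> simp_all
  · rintro ⟨hji, ⟨q1, q2⟩, hq, rfl⟩
    refine ⟨(q1, q2), ⟨?_, hq⟩, rfl⟩
    rintro h
    rw [Prod.mk.injEq] at h
    exact hji h.1

lemma prod_rep {n : ℕ} (J : Finset (Fin n × Bool)) :
    RepQ (2 * ((J.image Prod.fst).card)) (∏ q ∈ J, boxGen q) := by
  induction J using Finset.strongInduction with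
  | _ J ih =>
    by_cases hpair : ∃ i : Fin n, (i, true) ∈ J ∧ (i, false) ∈ J
    · obtain ⟨i, ht, hf⟩ := hpair
      have hf' : (i, false) ∈ J.erase (i, true) :=
        Finset.mem_erase.2 ⟨by simp, hf⟩
      set J' := (J.erase (i, true)).erase (i, false) with hJ'
      have hsub : J' ⊂ J :=
        (Finset.erase_subset _ _).trans_ssubset (Finset.erase_ssubset ht)
      have hprod : ∏ q ∈ J, boxGen q = (tpoly i + 1 * gpoly n) * ∏ q ∈ J', boxGen q := by
        rw [← Finset.mul_prod_erase J _ ht, ← Finset.mul_prod_erase _ _ hf', ← pair_eq i, ← hJ']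
        ring
      have hmem : i ∈ J.image Prod.fst := Finset.mem_image.2 ⟨_, ht, rfl⟩
      have hcard : (J'.image Prod.fst).card = (J.image Prod.fst).card - 1 := by
        rw [hJ', image_fst_erase_pair J i ht hf, Finset.card_erase_of_mem hmem]
      have hle : 1 ≤ (J.image Prod.fst).card := Finset.card_pos.2 ⟨i, hmem⟩
      rw [hprod]
      have h2 := RepQ.factor (tpoly_sos i) isSOS_one (tpoly_deg i) totalDegree_one rfl
        (ih J' hsub)
      exact h2.mono (by omega)
    · rcases Finset.eq_empty_or_nonempty J with rfl | ⟨⟨i, b⟩, hq⟩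
      · simpa using rep_one 0
      · have hnb : (i, !b) ∉ J := by
          intro h
          exact hpair ⟨i, by cases b <;> simp_all⟩
        set J' := J.erase (i, b) with hJ'
        have hsub : J' ⊂ J := Finset.erase_ssubset hq
        have hprod : ∏ q ∈ J, boxGen q =
            (C (1/2 : ℝ) * (boxGen (i, b) ^ 2 + tpoly i) + C (1/2 : ℝ) * gpoly n) *
              ∏ q ∈ J', boxGen q := by
          rw [← Finset.mul_prod_erase J _ hq, ← single_eq i b, ← hJ']
        have hmem : i ∈ J.image Prod.fst := Finset.mem_image.2 ⟨_, hq, rfl⟩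
        have hcard : (J'.image Prod.fst).card = (J.image Prod.fst).card - 1 := by
          rw [hJ', image_fst_erase_single J i b hq hnb, Finset.card_erase_of_mem hmem]
        have hle : 1 ≤ (J.image Prod.fst).card := Finset.card_pos.2 ⟨i, hmem⟩
        rw [hprod]
        have hasos : IsSOS (C (1/2 : ℝ) * (boxGen (i, b) ^ 2 + tpoly i)) :=
          IsSOS.smul (by norm_num) ((isSOS_sq _).add (tpoly_sos i))
        have hadeg : (C (1/2 : ℝ) * (boxGen (i, b) ^ 2 + tpoly i)).totalDegree ≤ 2 := by
          refine (totalDegree_mul _ _).trans ?_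
          have h1 : (boxGen (i, b) ^ 2).totalDegree ≤ 2 := by
            have := totalDegree_pow (boxGen (i, b)) 2
            have := boxGen_deg_le (i, b)
            omega
          have h2 := tpoly_deg i
          have h3 := totalDegree_add (boxGen (i, b) ^ 2) (tpoly i)
          have h4 : (C (1/2 : ℝ) : MvPoly n).totalDegree = 0 := totalDegree_C _
          omega
        have hbsos : IsSOS (C (1/2 : ℝ) : MvPoly n) := by
          simpa using IsSOS.smul (by norm_num : (0:ℝ) ≤ 1/2) isSOS_one
        have h2 := RepQ.factor hasos hbsos hadeg (totalDegree_C _) rfl (ih J' hsub)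
        exact h2.mono (by omega)

lemma rep_sum {n : ℕ} {ι : Type*} (s : Finset ι) (f : ι → MvPoly n) (e : ℕ)
    (h : ∀ j ∈ s, RepQ e (f j)) : RepQ e (∑ j ∈ s, f j) := by
  induction s using Finset.cons_induction with
  | empty => simpa using rep_zero e
  | cons a s ha ih =>
    rw [Finset.sum_cons]
    exact (h a (Finset.mem_cons_self _ _)).add (ih fun j hj => h j (Finset.mem_cons_of_mem hj))



/-- the truncated preordering of the box `[-1,1]ⁿ` at degree `d` is contained in
the truncated quadratic module of the unit ball at degree `d + n`
(Lemma `lem::box_to_ball`). -/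
theorem box_preordering_to_ball {n : ℕ} (d : ℕ) (p : MvPoly n)
    (σ : Finset (Fin n × Bool) → MvPoly n)
    (hσ : ∀ J, IsSOS (σ J))
    (hdeg : ∀ J : Finset (Fin n × Bool), (σ J * ∏ q ∈ J, boxGen q).totalDegree ≤ d)
    (hp : p = ∑ J ∈ (Finset.univ : Finset (Finset (Fin n × Bool))), σ J * ∏ q ∈ J, boxGen q) :
    ∃ s τ : MvPoly n,
      IsSOS s ∧ IsSOS τ ∧
      s.totalDegree ≤ d + n ∧
      (τ * ((1 : MvPoly n) - ∑ i, (X i : MvPoly n) ^ 2)).totalDegree ≤ d + n ∧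
      p = s + τ * ((1 : MvPoly n) - ∑ i, (X i : MvPoly n) ^ 2) := by
  have key : RepQ (d + n) p := by
    rw [hp]
    apply rep_sum
    intro J _
    by_cases h0 : σ J = 0
    · rw [h0, zero_mul]; exact rep_zero _
    · have hJd : (σ J).totalDegree + J.card ≤ d := by
        have := hdeg J
        rw [td_mul h0 (prod_boxGen_ne_zero J), prod_boxGen_deg J] at this
        omega
      have hcard1 : (J.image Prod.fst).card ≤ J.card := Finset.card_image_le
      have hcard2 : (J.image Prod.fst).card ≤ n := by
        have := Finset.card_le_univ (J.image Prod.fst)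
        simpa using this
      exact (RepQ.mul_sos (hσ J) (prod_rep J)).mono (by omega)
  obtain ⟨s, τ, h1, h2, h3, h4, h5⟩ := key
  refine ⟨s, τ, h1, h2, h3, ?_, h5⟩
  rcases h4 with rfl | h4
  · simp
  · have hg : ((1 : MvPoly n) - ∑ i, (X i : MvPoly n) ^ 2).totalDegree ≤ 2 := gpoly_deg
    exact (totalDegree_mul _ _).trans (by omega)

end
end
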